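/- arXiv:1109.1658 — 2 statements merged into one kernel-verified Lean document; each statement's English description precedes it below -/
import Mathlib

section
/- If L is a weak tensor product of the L_α, then for every β ∈ Ω, b ∈ L_β, and p ∈ ∏_α Σ_α, the set p[b,β] (p with β-th coordinate varying over b) belongs to L. -/
open Set

/-- A simple closure space on `σ`: a family of subsets closed under arbitrary
intersections (the empty intersection giving `univ`), containing `∅` and all singletons. -/
def IsSCS {σ : Type*} (L : Set (Set σ)) : Prop :=
  (∀ ω ⊆ L, ⋂₀ ω ∈ L) ∧ (∅ : Set σ) ∈ L ∧ ∀ p : σ, {p} ∈ L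

/-- The join of a subset `A` of atoms/points in a simple closure space `L`. -/
def sJoin {σ : Type*} (L : Set (Set σ)) (A : Set σ) : Set σ := ⋂₀ {b ∈ L | A ⊆ b}

/-- `b` covers `a` in `L`. -/
def CoversIn {σ : Type*} (L : Set (Set σ)) (a b : Set σ) : Prop :=
  a ⊂ b ∧ ∀ c ∈ L, a ⊆ c → c ⊆ b → c = a ∨ c = b

/-- `x` is a coatom of `L`. -/
def IsCoatomOf {σ : Type*} (L : Set (Set σ)) (x : Set σ) : Prop :=
  x ∈ L ∧ x ≠ univ ∧ ∀ c ∈ L, x ⊆ c → c = x ∨ c = univ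

/-- `L` is coatomistic: every element is a meet of coatoms. -/
def Coatomistic {σ : Type*} (L : Set (Set σ)) : Prop :=
  ∀ a ∈ L, a = ⋂₀ {x | IsCoatomOf L x ∧ a ⊆ x}

/-- Covering property: for any atom `p` and `a ∈ L` with `p ∧ a = 0`,
`p ∨ a` covers `a`. -/
def HasCovProp {σ : Type*} (L : Set (Set σ)) : Prop :=
  ∀ p : σ, ∀ a ∈ L, p ∉ a → CoversIn L a (sJoin L (insert p a))

/-- Covering property of the dual lattice of `L`. -/
def HasDualCovProp {σ : Type*} (L : Set (Set σ)) : Prop :=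
  ∀ x, IsCoatomOf L x → ∀ a ∈ L, sJoin L (x ∪ a) = univ → CoversIn L (x ∩ a) a

/-- `f` is an orthocomplementation of `L`: an order-reversing involution with
`a ∨ f a = 1` for all `a ∈ L`. -/
def IsOrthoOn {σ : Type*} (L : Set (Set σ)) (f : Set σ → Set σ) : Prop :=
  (∀ a ∈ L, f a ∈ L) ∧ (∀ a ∈ L, f (f a) = a) ∧
  (∀ a ∈ L, ∀ b ∈ L, a ⊆ b → f b ⊆ f a) ∧
  (∀ a ∈ L, ∀ b ∈ L, a ∪ f a ⊆ b → b = univ)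

/-- The permutation `g` of the points induces an automorphism of `L`. -/
def IsAutoOn {σ : Type*} (L : Set (Set σ)) (g : Equiv.Perm σ) : Prop :=
  ∀ a, a ∈ L ↔ g '' a ∈ L

/-- `L` contains `MO₃`: three distinct atoms `p, q, r` such that `p ∨ q`
covers each of them. -/
def ContainsMO3 {σ : Type*} (L : Set (Set σ)) : Prop :=
  ∃ p q r : σ, p ≠ q ∧ p ≠ r ∧ q ≠ r ∧
    CoversIn L {p} (sJoin L {p, q}) ∧ CoversIn L {q} (sJoin L {p, q}) ∧
    CoversIn L {r} (sJoin L {p, q})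

/-- `L` contains `MO₄`: four distinct atoms `p, q, r, s` such that `p ∨ q`
covers each of them. -/
def ContainsMO4 {σ : Type*} (L : Set (Set σ)) : Prop :=
  ∃ p q r s : σ, p ≠ q ∧ p ≠ r ∧ p ≠ s ∧ q ≠ r ∧ q ≠ s ∧ r ≠ s ∧
    CoversIn L {p} (sJoin L {p, q}) ∧ CoversIn L {q} (sJoin L {p, q}) ∧
    CoversIn L {r} (sJoin L {p, q}) ∧ CoversIn L {s} (sJoin L {p, q})

/-- A connected covering of the point set of `L`. -/
def IsConnCover {σ : Type*} (L : Set (Set σ)) (𝒜 : Set (Set σ)) : Prop :=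
  ⋃₀ 𝒜 = Set.univ ∧
  (∀ A ∈ 𝒜, ∃ p q : σ, p ∈ A ∧ q ∈ A ∧ p ≠ q) ∧
  (∀ A ∈ 𝒜, ∀ p ∈ A, ∀ q ∈ A, p ≠ q → ∃ r, r ∈ sJoin L {p, q} ∧ r ≠ p ∧ r ≠ q) ∧
  (∀ p q : σ, ∃ n : ℕ, ∃ c : Fin (n + 1) → Set σ, (∀ i, c i ∈ 𝒜) ∧
    p ∈ c 0 ∧ q ∈ c (Fin.last n) ∧
    ∀ i : Fin n, ∃ x y : σ, x ≠ y ∧ (x ∈ c i.castSucc ∧ x ∈ c i.succ) ∧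
      (y ∈ c i.castSucc ∧ y ∈ c i.succ))

/-- `L` is weakly connected: `L ≠ 2` and there is a connected covering. -/
def WeaklyConnected {σ : Type*} (L : Set (Set σ)) : Prop :=
  (∃ p q : σ, p ≠ q) ∧ ∃ 𝒜, IsConnCover L 𝒜

/-- Restriction of `L` to the subset `e`, as a family of subsets of `↥e`. -/
def restrictCS {σ : Type*} (L : Set (Set σ)) (e : Set σ) : Set (Set e) :=
  {B | ∃ a ∈ L, a ⊆ e ∧ B = Subtype.val ⁻¹' a}

/-- Center of an orthocomplemented simple closure space: elements whose
orthocomplement is the set complement. -/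
def centerOf {σ : Type*} (L : Set (Set σ)) (f : Set σ → Set σ) : Set (Set σ) :=
  {a ∈ L | f a = aᶜ}

/-- Central cover of a point `p`. -/
def centralCover {σ : Type*} (L : Set (Set σ)) (f : Set σ → Set σ) (p : σ) : Set σ :=
  ⋂₀ {a ∈ centerOf L f | p ∈ a}

section Family

variable {Ω : Type*} {X : Ω → Type*}

/-- `⋃_α π_α⁻¹ (a α)`. -/
def cylUnion (a : ∀ α, Set (X α)) : Set (∀ α, X α) := {p | ∃ α, p α ∈ a α}

/-- `p[B, β]`: the point `p` with its `β`-th coordinate varying over `B`. -/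
def pSub (p : ∀ α, X α) (β : Ω) (B : Set (X β)) : Set (∀ α, X α) :=
  {q | q β ∈ B ∧ ∀ α, α ≠ β → q α = p α}

/-- The section `R_β[p]` of `R ⊆ ∏_α X α`. -/
def sect (R : Set (∀ α, X α)) (β : Ω) (p : ∀ α, X α) : Set (X β) :=
  {q | ∃ r ∈ R, r β = q ∧ ∀ α, α ≠ β → r α = p α}

/-- The box product `⊼_α L_α`: all nonempty intersections of the sets
`⋃_α π_α⁻¹ (a α)`. -/
def boxProd (L : ∀ α, Set (Set (X α))) : Set (Set (∀ α, X α)) :=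
  {A | ∃ ω ⊆ {B | ∃ a : ∀ α, Set (X α), (∀ α, a α ∈ L α) ∧ B = cylUnion a},
    ω.Nonempty ∧ A = ⋂₀ ω}

/-- The Fraser product `⊻_α L_α`: all `R` whose sections all lie in the factors. -/
def fraserProd (L : ∀ α, Set (Set (X α))) : Set (Set (∀ α, X α)) :=
  {R | ∀ β, ∀ p : ∀ α, X α, sect R β p ∈ L β}

/-- `M` is a weak tensor product of the family `L`: axioms P1–P3. -/
def IsWTP (L : ∀ α, Set (Set (X α))) (M : Set (Set (∀ α, X α))) : Prop :=
  IsSCS M ∧ (∀ a : ∀ α, Set (X α), (∀ α, a α ∈ L α) → cylUnion a ∈ M) ∧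
  (∀ p : ∀ α, X α, ∀ β, ∀ B : Set (X β), pSub p β B ∈ M → B ∈ L β)

/-- The closure operator `⋁_β R = ⋃_p p[⋁ R_β[p]]`. -/
def vJoin (L : ∀ α, Set (Set (X α))) (β : Ω) (R : Set (∀ α, X α)) : Set (∀ α, X α) :=
  ⋃ p : ∀ α, X α, pSub p β (sJoin (L β) (sect R β p))

/-- The orthocomplementation `#` induced on the box product by
orthocomplementations of the factors. -/
def sharp (f : ∀ α, Set (X α) → Set (X α)) (a : Set (∀ α, X α)) : Set (∀ α, X α) :=
  {p | ∀ q ∈ a, ∃ α, p α ∈ f α {q α}}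

end Family

section Binary

variable {X₁ X₂ : Type*}

/-- `a₁ × Σ₂ ∪ Σ₁ × a₂`. -/
def cylUnion₂ (a₁ : Set X₁) (a₂ : Set X₂) : Set (X₁ × X₂) := {p | p.1 ∈ a₁ ∨ p.2 ∈ a₂}

/-- Binary box product. -/
def boxProd₂ (L₁ : Set (Set X₁)) (L₂ : Set (Set X₂)) : Set (Set (X₁ × X₂)) :=
  {A | ∃ ω ⊆ {B | ∃ a₁ ∈ L₁, ∃ a₂ ∈ L₂, B = cylUnion₂ a₁ a₂}, ω.Nonempty ∧ A = ⋂₀ ω}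

/-- Binary Fraser product. -/
def fraserProd₂ (L₁ : Set (Set X₁)) (L₂ : Set (Set X₂)) : Set (Set (X₁ × X₂)) :=
  {R | (∀ p₁, {q | (p₁, q) ∈ R} ∈ L₂) ∧ (∀ p₂, {q | (q, p₂) ∈ R} ∈ L₁)}

/-- Binary weak tensor product: axioms P1–P3. -/
def IsWTP₂ (L₁ : Set (Set X₁)) (L₂ : Set (Set X₂)) (M : Set (Set (X₁ × X₂))) : Prop :=
  IsSCS M ∧ (∀ a₁ ∈ L₁, ∀ a₂ ∈ L₂, cylUnion₂ a₁ a₂ ∈ M) ∧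
  (∀ p₁ : X₁, ∀ A₂ : Set X₂, {p₁} ×ˢ A₂ ∈ M → A₂ ∈ L₂) ∧
  (∀ p₂ : X₂, ∀ A₁ : Set X₁, A₁ ×ˢ {p₂} ∈ M → A₁ ∈ L₁)

/-- The simple closure space `MO_Σ`, containing only `∅`, `Σ` and the singletons. -/
def MOspace (X : Type*) : Set (Set X) := {∅, univ} ∪ {A | ∃ p, A = {p}}

end Binary

/-! A point-section `p[b, β]` is the box `∏_α t α` with `t β = b` and `t α = {p α}` otherwise.
A box with sides in the factors is the intersection of the cylinders `π_α⁻¹ (t α)`, and each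
such cylinder is an instance of axiom P2, with all sides other than the `α`-th one empty. -/

theorem IsSCS.iInter_mem {σ ι : Type*} {M : Set (Set σ)} (hM : IsSCS M) {s : ι → Set σ}
    (hs : ∀ i, s i ∈ M) : ⋂ i, s i ∈ M := by
  rw [← sInter_range]
  exact hM.1 _ (range_subset_iff.2 hs)

section Family

variable {Ω : Type*} {X : Ω → Type*}

theorem cylUnion_update_empty [DecidableEq Ω] (γ : Ω) (s : Set (X γ)) :
    cylUnion (Function.update (fun α => (∅ : Set (X α))) γ s) = Function.eval γ ⁻¹' s := by
  ext q
  simpa [cylUnion] using Function.exists_update_iff (fun α => (∅ : Set (X α))) fun α t => q α ∈ t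

theorem pSub_eq_univ_pi [DecidableEq Ω] (p : ∀ α, X α) (β : Ω) (b : Set (X β)) :
    pSub p β b = univ.pi (Function.update (fun α => {p α}) β b) := by
  ext q
  simpa [pSub] using
    (Function.forall_update_iff (fun α => ({p α} : Set (X α))) fun α t => q α ∈ t).symm

variable {L : ∀ α, Set (Set (X α))} {M : Set (Set (∀ α, X α))}

theorem IsWTP.preimage_eval_mem (hM : IsWTP L M) (hL : ∀ α, (∅ : Set (X α)) ∈ L α)
    {γ : Ω} {s : Set (X γ)} (hs : s ∈ L γ) : Function.eval γ ⁻¹' s ∈ M := by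
  classical
  rw [← cylUnion_update_empty]
  exact hM.2.1 _ <| (Function.forall_update_iff _ fun α t => t ∈ L α).2 ⟨hs, fun α _ => hL α⟩

theorem IsWTP.univ_pi_mem (hM : IsWTP L M) (hL : ∀ α, (∅ : Set (X α)) ∈ L α)
    {t : ∀ α, Set (X α)} (ht : ∀ α, t α ∈ L α) : univ.pi t ∈ M := by
  rw [univ_pi_eq_iInter]
  exact hM.1.iInter_mem fun α => hM.preimage_eval_mem hL (ht α)

end Family

/-- in a weak tensor product, `p[b, β] ∈ L` for every `b ∈ L_β`
and every point `p`. -/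
theorem stmt_2 {Ω : Type*} {X : Ω → Type*} (L : ∀ α, Set (Set (X α)))
    (hL : ∀ α, IsSCS (L α)) (M : Set (Set (∀ α, X α))) (hM : IsWTP L M)
    (β : Ω) (b : Set (X β)) (hb : b ∈ L β) (p : ∀ α, X α) :
    pSub p β b ∈ M := by
  classical
  rw [pSub_eq_univ_pi]
  refine hM.univ_pi_mem (fun α => (hL α).2.1) ?_
  exact (Function.forall_update_iff _ fun α t => t ∈ L α).2 ⟨hb, fun α _ => (hL α).2.2 (p α)⟩
end

section
/- Let L be a simple closure space on 𝚺 = ∏_α Σ_α satisfying axiom P2 of weak tensor products. If p, q ∈ 𝚺 differ in at least two coordinates, then the join p ∨ q in L equals the two-element set {p, q}. -/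
open Set

/-
Each set `{s | s δ = x ∨ s ε = y}` with `δ ≠ ε` is a cylinder union of
singletons and empty sets, so it lies in `M` by P2. Any `r ∈ p ∨ q` therefore satisfies
`r δ = p δ ∨ r ε = q ε` and `r δ = q δ ∨ r ε = p ε` for all `δ ≠ ε`. If `r δ ≠ p δ`, the first
condition forces `r = q` off `δ`; if moreover `r ≠ q`, then `r δ ≠ q δ` and the second condition
forces `r = p` off `δ`, so `p` and `q` would differ only at `δ`.
-/

lemma sJoin_subset {σ : Type*} {L : Set (Set σ)} {A b : Set σ} (hb : b ∈ L) (hAb : A ⊆ b) :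
    sJoin L A ⊆ b :=
  sInter_subset_of_mem ⟨hb, hAb⟩

lemma subset_sJoin {σ : Type*} (L : Set (Set σ)) (A : Set σ) : A ⊆ sJoin L A :=
  subset_sInter fun _ hb => hb.2

section Product

variable {Ω : Type*} {X : Ω → Type*}

lemma apply_eq_or_apply_eq_of_mem_sJoin_pair [DecidableEq Ω] {L : ∀ α, Set (Set (X α))}
    (hL : ∀ α, IsSCS (L α)) {M : Set (Set (∀ α, X α))}
    (hP2 : ∀ a : ∀ α, Set (X α), (∀ α, a α ∈ L α) → cylUnion a ∈ M)
    {p q r : ∀ α, X α} (hr : r ∈ sJoin M {p, q}) {δ ε : Ω} (hδε : δ ≠ ε) :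
    r δ = p δ ∨ r ε = q ε := by
  let a : ∀ α, Set (X α) := fun α => if α = δ then {p α} else if α = ε then {q α} else ∅
  have ha : ∀ α, a α ∈ L α := by
    intro α
    simp only [a]
    split_ifs
    exacts [(hL α).2.2 _, (hL α).2.2 _, (hL α).2.1]
  have hpq : {p, q} ⊆ cylUnion a := by
    rintro s (rfl | rfl)
    · exact ⟨δ, by simp [a]⟩
    · exact ⟨ε, by simp [a, hδε.symm]⟩
  obtain ⟨α, hα⟩ := sJoin_subset (hP2 a ha) hpq hr
  simp only [a] at hα
  split_ifs at hα with hαδ hαε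
  · exact .inl (hαδ ▸ hα)
  · exact .inr (hαε ▸ hα)
  · exact hα.elim

lemma eq_or_eq_of_forall_apply_eq_or_apply_eq {p q r : ∀ α, X α}
    (hpq : ∀ δ ε, δ ≠ ε → r δ = p δ ∨ r ε = q ε)
    (hqp : ∀ δ ε, δ ≠ ε → r δ = q δ ∨ r ε = p ε)
    {β γ : Ω} (hβγ : β ≠ γ) (h₁ : p β ≠ q β) (h₂ : p γ ≠ q γ) :
    r = p ∨ r = q := by
  by_contra! ⟨hrp, hrq⟩
  obtain ⟨δ, hδp⟩ := Function.ne_iff.mp hrp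
  have hq_off : ∀ ε, ε ≠ δ → r ε = q ε := fun ε hε => (hpq δ ε hε.symm).resolve_left hδp
  have hδq : r δ ≠ q δ := fun h =>
    hrq <| funext fun ε => (eq_or_ne ε δ).elim (fun hε => hε ▸ h) (hq_off ε)
  have hp_off : ∀ ε, ε ≠ δ → r ε = p ε := fun ε hε => (hqp δ ε hε.symm).resolve_left hδq
  have hpq_off : ∀ ε, ε ≠ δ → p ε = q ε := fun ε hε => (hp_off ε hε).symm.trans (hq_off ε hε)
  by_cases hβδ : β = δ
  · exact h₂ (hpq_off γ (hβδ ▸ hβγ.symm))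
  · exact h₁ (hpq_off β hβδ)

end Product

theorem stmt_3_general {Ω : Type*} {X : Ω → Type*} (L : ∀ α, Set (Set (X α)))
    (hL : ∀ α, IsSCS (L α)) (M : Set (Set (∀ α, X α)))
    (hP2 : ∀ a : ∀ α, Set (X α), (∀ α, a α ∈ L α) → cylUnion a ∈ M)
    (p q : ∀ α, X α) (β γ : Ω) (hβγ : β ≠ γ) (h₁ : p β ≠ q β) (h₂ : p γ ≠ q γ) :
    sJoin M {p, q} = {p, q} := by
  classical
  refine (subset_sJoin M _).antisymm' fun r hr => ?_
  have hqp : r ∈ sJoin M {q, p} := pair_comm p q ▸ hr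
  exact eq_or_eq_of_forall_apply_eq_or_apply_eq
    (fun _ _ => apply_eq_or_apply_eq_of_mem_sJoin_pair hL hP2 hr)
    (fun _ _ => apply_eq_or_apply_eq_of_mem_sJoin_pair hL hP2 hqp) hβγ h₁ h₂

/-- if `L` is a simple closure space on the product satisfying axiom P2
and `p, q` differ in at least two coordinates, then `p ∨ q = {p, q}`. -/
theorem stmt_3 {Ω : Type*} {X : Ω → Type*} (L : ∀ α, Set (Set (X α)))
    (hL : ∀ α, IsSCS (L α)) (M : Set (Set (∀ α, X α))) (hM : IsSCS M)
    (hP2 : ∀ a : ∀ α, Set (X α), (∀ α, a α ∈ L α) → cylUnion a ∈ M)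
    (p q : ∀ α, X α) (β γ : Ω) (hβγ : β ≠ γ) (h₁ : p β ≠ q β) (h₂ : p γ ≠ q γ) :
    sJoin M {p, q} = {p, q} :=
  stmt_3_general L hL M hP2 p q β γ hβγ h₁ h₂
end
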